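/- For any vectors r1, r2 in R^K and temperature τ > 0, the soft indmax policy f_τ(r)(i) = exp((r(i) − F_τ(r))/τ), where F_τ(r) = τ log ∑_j exp(r(j)/τ), satisfies ‖f_τ(r1) − f_τ(r2)‖_∞ ≤ (2/τ)·‖r1 − r2‖_∞. -/

import Mathlib

open Real Finset

/-- Temperature-scaled log-sum-exp. -/
noncomputable def lse (K : ℕ) (τ : ℝ) (r : Fin K → ℝ) : ℝ :=
  τ * Real.log (∑ i, Real.exp (r i / τ))

/-- Soft indmax (softmax) distribution. -/
noncomputable def softmax (K : ℕ) (τ : ℝ) (r : Fin K → ℝ) : Fin K → ℝ :=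
  fun i => Real.exp ((r i - lse K τ r) / τ)

/-!
Each softmax weight is `exp` of `(r i - lse r) / τ`, a nonpositive number because `lse` dominates
every coordinate, and `exp` is `1`-Lipschitz on `(-∞, 0]`. The log-sum-exp is monotone and
commutes with adding constants, hence is `1`-Lipschitz for the sup norm; so the exponent moves by
at most `2 ‖r₁ - r₂‖ / τ`.
-/

lemma Real.abs_exp_sub_exp_le_of_nonpos {a b : ℝ} (ha : a ≤ 0) (hb : b ≤ 0) :
    |exp a - exp b| ≤ |a - b| := by
  wlog hba : b ≤ a generalizing a b
  · rw [abs_sub_comm, abs_sub_comm a]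
    exact this hb ha (le_of_not_ge hba)
  have hfactor : exp a - exp b = exp a * (1 - exp (-(a - b))) := by
    rw [mul_sub, ← exp_add]
    ring_nf
  rw [abs_of_nonneg (sub_nonneg.2 (exp_le_exp.2 hba)), abs_of_nonneg (sub_nonneg.2 hba), hfactor]
  calc exp a * (1 - exp (-(a - b))) ≤ 1 * (a - b) := by
        refine mul_le_mul (exp_le_one_iff.2 ha) ?_ ?_ zero_le_one
        · linarith [one_sub_le_exp_neg (a - b)]
        · simpa using exp_le_one_iff.2 (neg_nonpos.2 (sub_nonneg.2 hba))
    _ = a - b := one_mul _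

section Lse

variable {K : ℕ} [NeZero K] {τ : ℝ}

lemma sum_exp_div_pos (τ : ℝ) (r : Fin K → ℝ) : 0 < ∑ i, exp (r i / τ) :=
  sum_pos (fun _ _ => exp_pos _) univ_nonempty

lemma lse_mono (hτ : 0 < τ) {r₁ r₂ : Fin K → ℝ} (h : r₁ ≤ r₂) : lse K τ r₁ ≤ lse K τ r₂ := by
  unfold lse
  gcongr with i
  exact h i

lemma lse_add_const (hτ : τ ≠ 0) (r : Fin K → ℝ) (c : ℝ) :
    lse K τ (fun i => r i + c) = lse K τ r + c := by
  have hsum : ∑ i, exp ((r i + c) / τ) = exp (c / τ) * ∑ i, exp (r i / τ) := by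
    rw [mul_sum]
    refine sum_congr rfl fun i _ => ?_
    rw [← exp_add, add_div, add_comm]
  unfold lse
  rw [hsum, log_mul (exp_pos _).ne' (sum_exp_div_pos τ r).ne', log_exp]
  field_simp
  ring

lemma lse_le_lse_add_norm_sub (hτ : 0 < τ) (r₁ r₂ : Fin K → ℝ) :
    lse K τ r₁ ≤ lse K τ r₂ + ‖r₁ - r₂‖ := by
  rw [← lse_add_const hτ.ne']
  refine lse_mono hτ fun i => ?_
  have := (abs_le.1 (norm_le_pi_norm (r₁ - r₂) i)).2
  simp only [Pi.sub_apply] at this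
  linarith

lemma abs_lse_sub_lse_le (hτ : 0 < τ) (r₁ r₂ : Fin K → ℝ) :
    |lse K τ r₁ - lse K τ r₂| ≤ ‖r₁ - r₂‖ := by
  rw [abs_sub_le_iff]
  constructor
  · linarith [lse_le_lse_add_norm_sub hτ r₁ r₂]
  · linarith [lse_le_lse_add_norm_sub hτ r₂ r₁, norm_sub_rev r₁ r₂]

end Lse

lemma le_lse {K : ℕ} {τ : ℝ} (hτ : 0 < τ) (r : Fin K → ℝ) (i : Fin K) : r i ≤ lse K τ r := by
  unfold lse
  rw [← div_le_iff₀' hτ, ← log_exp (r i / τ)]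
  exact log_le_log (exp_pos _)
    (single_le_sum (f := fun j => exp (r j / τ)) (fun j _ => (exp_pos _).le) (mem_univ i))

theorem softmax_lipschitz (K : ℕ) (hK : 1 ≤ K) (τ : ℝ) (hτ : 0 < τ)
    (r1 r2 : Fin K → ℝ) :
    ‖softmax K τ r1 - softmax K τ r2‖ ≤ (2 / τ) * ‖r1 - r2‖ := by
  have : NeZero K := ⟨by omega⟩
  refine (pi_norm_le_iff_of_nonneg (by positivity)).2 fun i => ?_
  have hexponent (r : Fin K → ℝ) : (r i - lse K τ r) / τ ≤ 0 :=
    div_nonpos_of_nonpos_of_nonneg (sub_nonpos.2 (le_lse hτ r i)) hτ.le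
  calc |softmax K τ r1 i - softmax K τ r2 i|
      ≤ |(r1 i - lse K τ r1) / τ - (r2 i - lse K τ r2) / τ| :=
        abs_exp_sub_exp_le_of_nonpos (hexponent r1) (hexponent r2)
    _ = |(r1 i - r2 i) - (lse K τ r1 - lse K τ r2)| / τ := by
        rw [div_sub_div_same, abs_div, abs_of_pos hτ]
        ring_nf
    _ ≤ (‖r1 - r2‖ + ‖r1 - r2‖) / τ := by
        gcongr
        exact (abs_sub _ _).trans
          (add_le_add (norm_le_pi_norm (r1 - r2) i) (abs_lse_sub_lse_le hτ r1 r2))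
    _ = (2 / τ) * ‖r1 - r2‖ := by ring
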